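/- Let Φ denote the standard Gaussian CDF and Φ' its density. For any fixed s₀ > 0, the integral ∫_0^∞ Φ'(z)² / (Φ(z + s₀) − Φ(z)) dz is finite. -/

import Mathlib

/-!
On `[z, z + s₀]` with `z ≥ 0` the density is decreasing, so the denominator is at least
`s₀ Φ'(z + s₀)`. Completing the square, `Φ'(z)² / Φ'(z + s₀) = e^{s₀²} Φ'(z - s₀)`, so the
integrand is dominated by the integrable function `e^{s₀²} Φ'(z - s₀) / s₀`.
-/

open MeasureTheory Real Set Filter Topology

/-- Standard Gaussian density Φ'. -/
noncomputable def gaussPdf (z : ℝ) : ℝ := (Real.sqrt (2 * Real.pi))⁻¹ * Real.exp (-z ^ 2 / 2)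

/-- Standard Gaussian CDF Φ. -/
noncomputable def gaussCdf (z : ℝ) : ℝ := ∫ u in Set.Iic z, gaussPdf u

lemma gaussPdf_pos (z : ℝ) : 0 < gaussPdf z := by
  unfold gaussPdf
  positivity

lemma continuous_gaussPdf : Continuous gaussPdf := by
  unfold gaussPdf
  fun_prop

lemma integrable_gaussPdf : Integrable gaussPdf := by
  have h : gaussPdf = fun z ↦ (√(2 * π))⁻¹ * rexp (-(1 / 2) * z ^ 2) := by
    funext z
    unfold gaussPdf
    ring_nf
  rw [h]
  exact (integrable_exp_neg_mul_sq (by norm_num)).const_mul _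

lemma gaussPdf_antitoneOn : AntitoneOn gaussPdf (Ici 0) := by
  intro x hx y _ hxy
  unfold gaussPdf
  gcongr

lemma gaussPdf_sq_div_gaussPdf_add (z s : ℝ) :
    gaussPdf z ^ 2 / gaussPdf (z + s) = rexp (s ^ 2) * gaussPdf (z - s) := by
  rw [div_eq_iff (gaussPdf_pos _).ne']
  unfold gaussPdf
  rw [mul_pow, ← Real.exp_nat_mul]
  field_simp
  simp only [← Real.exp_add]
  ring_nf

lemma gaussCdf_sub_gaussCdf (a b : ℝ) : gaussCdf b - gaussCdf a = ∫ x in a..b, gaussPdf x := by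
  unfold gaussCdf
  exact intervalIntegral.integral_Iic_sub_Iic integrable_gaussPdf.integrableOn
    integrable_gaussPdf.integrableOn

lemma continuous_gaussCdf : Continuous gaussCdf := by
  have h : gaussCdf = fun z ↦ gaussCdf 0 + ∫ x in (0 : ℝ)..z, gaussPdf x := by
    funext z
    rw [← gaussCdf_sub_gaussCdf]
    ring
  rw [h]
  exact continuous_const.add (integrable_gaussPdf.continuous_primitive 0)

lemma gaussCdf_sub_gaussCdf_pos {a b : ℝ} (hab : a < b) : 0 < gaussCdf b - gaussCdf a := by
  rw [gaussCdf_sub_gaussCdf]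
  exact intervalIntegral.intervalIntegral_pos_of_pos
    integrable_gaussPdf.intervalIntegrable gaussPdf_pos hab

lemma sub_mul_gaussPdf_le_gaussCdf_sub_gaussCdf {a b : ℝ} (ha : 0 ≤ a) (hab : a ≤ b) :
    (b - a) * gaussPdf b ≤ gaussCdf b - gaussCdf a := by
  rw [gaussCdf_sub_gaussCdf, ← smul_eq_mul, ← intervalIntegral.integral_const]
  refine intervalIntegral.integral_mono_on hab intervalIntegrable_const
    integrable_gaussPdf.intervalIntegrable fun x hx ↦ ?_
  exact gaussPdf_antitoneOn (ha.trans hx.1 : 0 ≤ x) (ha.trans hab : 0 ≤ b) hx.2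

theorem stmt7 (s₀ : ℝ) (hs₀ : 0 < s₀) :
    IntegrableOn (fun z => gaussPdf z ^ 2 / (gaussCdf (z + s₀) - gaussCdf z))
      (Set.Ioi (0 : ℝ)) := by
  have hden : ∀ z, 0 < gaussCdf (z + s₀) - gaussCdf z := fun z ↦
    gaussCdf_sub_gaussCdf_pos (by linarith)
  have hmeas : Continuous fun z ↦ gaussPdf z ^ 2 / (gaussCdf (z + s₀) - gaussCdf z) :=
    (continuous_gaussPdf.pow 2).div
      ((continuous_gaussCdf.comp (continuous_add_const s₀)).sub continuous_gaussCdf)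
      fun z ↦ (hden z).ne'
  have hdom : Integrable fun z ↦ rexp (s₀ ^ 2) / s₀ * gaussPdf (z - s₀) :=
    (integrable_gaussPdf.comp_sub_right s₀).const_mul _
  refine hdom.integrableOn.mono' hmeas.aestronglyMeasurable.restrict ?_
  filter_upwards [ae_restrict_mem measurableSet_Ioi] with z (hz : 0 < z)
  have hlow : s₀ * gaussPdf (z + s₀) ≤ gaussCdf (z + s₀) - gaussCdf z := by
    simpa using sub_mul_gaussPdf_le_gaussCdf_sub_gaussCdf hz.le (by linarith : z ≤ z + s₀)
  rw [Real.norm_of_nonneg (div_nonneg (by positivity) (hden z).le)]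
  calc gaussPdf z ^ 2 / (gaussCdf (z + s₀) - gaussCdf z)
      ≤ gaussPdf z ^ 2 / (s₀ * gaussPdf (z + s₀)) :=
        div_le_div_of_nonneg_left (by positivity) (mul_pos hs₀ (gaussPdf_pos _)) hlow
    _ = rexp (s₀ ^ 2) / s₀ * gaussPdf (z - s₀) := by
        rw [div_mul_eq_div_div_swap, gaussPdf_sq_div_gaussPdf_add]
        ring
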